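/- arXiv:1908.05527 — 2 statements merged into one kernel-verified Lean document; each statement's English description precedes it below -/
import Mathlib

section
/- Let θ : [0,1] × [0,∞) → ℝ be differentiable in x and satisfy the Prüfer equation θ'(x;λ) = √λ (cos²θ(x;λ) + ω(x) sin²θ(x;λ)) for a.e. x ∈ [0,1], where ω ∈ L¹([0,1],ℝ), ω ≥ 0 a.e., and ∫₀¹ ω > 0. Then θ(1;λ) → +∞ as λ → +∞. -/
/-!
Since `cos² θ + ω sin² θ` is a convex combination of `1` and `ω`, it is at least `min 1 ω`.
Integrating the Prüfer equation and using `θ(0) ≥ 0` gives `θ(1;λ) ≥ √λ ∫₀¹ min 1 ω`, and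
this integral is positive because `min 1 ω ≥ 0` has the same support as `ω`.
-/

open MeasureTheory Real Set Filter intervalIntegral

lemma aestronglyMeasurable_of_ae_continuousAt {α β : Type*} [TopologicalSpace α]
    [MeasurableSpace α] [OpensMeasurableSpace α] [PseudoMetricSpace β]
    [SecondCountableTopologyEither α β] {f : α → β} {μ : Measure α}
    (h : ∀ᵐ x ∂μ, ContinuousAt f x) : AEStronglyMeasurable f μ := by
  have hcont : ContinuousOn f {x | ContinuousAt f x} := fun _ hx => hx.continuousWithinAt
  have := hcont.aestronglyMeasurable (μ := μ) (measurableSet_of_continuousAt f)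
  rwa [Measure.restrict_eq_self_of_ae_mem (s := {x | ContinuousAt f x}) h] at this

lemma min_one_le_cos_sq_add_mul_sin_sq (a w : ℝ) : min 1 w ≤ cos a ^ 2 + w * sin a ^ 2 := by
  have := sin_sq_add_cos_sq a
  nlinarith [min_le_left 1 w, min_le_right 1 w, sq_nonneg (cos a), sq_nonneg (sin a)]

lemma abs_cos_sq_add_mul_sin_sq_le (a w : ℝ) : |cos a ^ 2 + w * sin a ^ 2| ≤ 1 + |w| := by
  have hw : |w * sin a ^ 2| ≤ |w| := by
    rw [abs_mul, abs_of_nonneg (sq_nonneg (sin a))]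
    exact mul_le_of_le_one_right (abs_nonneg w) (sin_sq_le_one a)
  calc |cos a ^ 2 + w * sin a ^ 2| ≤ |cos a ^ 2| + |w * sin a ^ 2| := abs_add_le _ _
    _ ≤ 1 + |w| := by
      gcongr
      rw [abs_of_nonneg (sq_nonneg (cos a))]
      exact cos_sq_le_one a

section

variable {α : Type*} [MeasurableSpace α] {μ : Measure α} {ω θ : α → ℝ}

lemma integrable_cos_sq_add_mul_sin_sq [IsFiniteMeasure μ] (hω : Integrable ω μ)
    (hθ : AEStronglyMeasurable θ μ) :
    Integrable (fun x => cos (θ x) ^ 2 + ω x * sin (θ x) ^ 2) μ := by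
  refine ((integrable_const 1).add hω.norm).mono' (by fun_prop) (ae_of_all _ fun x => ?_)
  exact abs_cos_sq_add_mul_sin_sq_le (θ x) (ω x)

lemma integrable_min_one [IsFiniteMeasure μ] (hω : Integrable ω μ) :
    Integrable (fun x => min 1 (ω x)) μ :=
  (integrable_const 1).inf hω

lemma integral_min_one_le_integral_cos_sq_add_mul_sin_sq [IsFiniteMeasure μ]
    (hω : Integrable ω μ) (hθ : AEStronglyMeasurable θ μ) :
    ∫ x, min 1 (ω x) ∂μ ≤ ∫ x, cos (θ x) ^ 2 + ω x * sin (θ x) ^ 2 ∂μ :=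
  integral_mono (integrable_min_one hω) (integrable_cos_sq_add_mul_sin_sq hω hθ)
    fun x => min_one_le_cos_sq_add_mul_sin_sq (θ x) (ω x)

lemma integral_min_one_pos [IsFiniteMeasure μ] (hω : Integrable ω μ) (hnn : 0 ≤ᵐ[μ] ω)
    (hpos : 0 < ∫ x, ω x ∂μ) : 0 < ∫ x, min 1 (ω x) ∂μ := by
  have hsupp : Function.support (fun x => min 1 (ω x)) = Function.support ω := by
    ext x
    simp only [Function.mem_support, ne_eq]
    constructor
    · rintro h hx
      exact h (by simp [hx])
    · intro h hx
      rcases min_choice 1 (ω x) with h1 | h1 <;> simp_all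
  have hmin_nn : 0 ≤ᵐ[μ] fun x => min 1 (ω x) := by
    filter_upwards [hnn] with x hx using le_min zero_le_one hx
  rw [integral_pos_iff_support_of_nonneg_ae hmin_nn (integrable_min_one hω), hsupp]
  rwa [integral_pos_iff_support_of_nonneg_ae hnn hω] at hpos

end

/-- If θ(·;λ) is absolutely continuous on [0,1] with θ(0;λ) ∈ [0,π) and
satisfies the Prüfer equation θ'(x;λ) = √λ (cos²θ + ω sin²θ) a.e., where ω is
integrable, nonnegative a.e. and ∫₀¹ ω > 0, then θ(1;λ) → +∞ as λ → +∞. -/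
theorem prufer_angle_tendsto_atTop
    (ω : ℝ → ℝ)
    (hωint : IntegrableOn ω (Icc (0:ℝ) 1))
    (hωnonneg : ∀ᵐ x ∂(volume.restrict (Icc (0:ℝ) 1)), 0 ≤ ω x)
    (hωpos : 0 < ∫ x in (0:ℝ)..1, ω x)
    (θ : ℝ → ℝ → ℝ)
    (hθ0 : ∀ lam : ℝ, 0 ≤ lam → θ lam 0 ∈ Ico (0:ℝ) π)
    (hθae : ∀ lam : ℝ, 0 ≤ lam → ∀ᵐ x ∂(volume.restrict (Icc (0:ℝ) 1)),
        HasDerivAt (θ lam)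
          (Real.sqrt lam * (Real.cos (θ lam x) ^ 2 + ω x * Real.sin (θ lam x) ^ 2)) x)
    (hθFTC : ∀ lam : ℝ, 0 ≤ lam → ∀ x ∈ Icc (0:ℝ) 1,
        θ lam x = θ lam 0 + ∫ t in (0:ℝ)..x,
          Real.sqrt lam * (Real.cos (θ lam t) ^ 2 + ω t * Real.sin (θ lam t) ^ 2)) :
    Tendsto (fun lam => θ lam 1) atTop atTop := by
  have hIoc : ∀ {p : ℝ → Prop}, (∀ᵐ x ∂(volume.restrict (Icc (0:ℝ) 1)), p x) →
      ∀ᵐ x ∂(volume.restrict (Ioc (0:ℝ) 1)), p x :=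
    ae_restrict_of_ae_restrict_of_subset Ioc_subset_Icc_self
  have hω : Integrable ω (volume.restrict (Ioc (0:ℝ) 1)) := hωint.mono_set Ioc_subset_Icc_self
  have hc : 0 < ∫ x in Ioc (0:ℝ) 1, min 1 (ω x) :=
    integral_min_one_pos hω (hIoc hωnonneg) (by rwa [← integral_of_le zero_le_one])
  refine tendsto_atTop_mono' atTop ?_ (tendsto_sqrt_atTop.atTop_mul_const hc)
  filter_upwards [eventually_ge_atTop 0] with lam hlam
  have hθ : AEStronglyMeasurable (θ lam) (volume.restrict (Ioc (0:ℝ) 1)) :=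
    aestronglyMeasurable_of_ae_continuousAt
      (hIoc ((hθae lam hlam).mono fun _ hx => hx.continuousAt))
  set rate := ∫ x in Ioc (0:ℝ) 1, cos (θ lam x) ^ 2 + ω x * sin (θ lam x) ^ 2
  calc √lam * ∫ x in Ioc (0:ℝ) 1, min 1 (ω x)
      ≤ √lam * rate :=
        mul_le_mul_of_nonneg_left
          (integral_min_one_le_integral_cos_sq_add_mul_sin_sq hω hθ) (sqrt_nonneg lam)
    _ ≤ θ lam 0 + √lam * rate :=
        le_add_of_nonneg_left (hθ0 lam hlam).1
    _ = θ lam 1 := by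
        rw [hθFTC lam hlam 1 ⟨zero_le_one, le_rfl⟩, integral_of_le zero_le_one,
          MeasureTheory.integral_const_mul]
end

section
/- Uniform boundedness of the Prüfer radius exponent: Let H(x;λ) = (√λ/2) ∫₀ˣ (1 − ω(t)) sin(2θ(t;λ)) dt, where ω is monotone on [0,1] with inf ω > 0 and θ is the Prüfer angle satisfying θ' = √λ (cos²θ + ω sin²θ). Then there exist H₀ > 0 and Λ > 0 such that |H(x;λ)| ≤ H₀ for all x ∈ [0,1] and all λ ≥ Λ. -/
/-!
Write `q_w(y) = cos² y + w sin² y`, so that `θ' = κ q_ω(θ)` with `κ = √λ`. For a frozen weight `w`,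
`(log q_w(θ))' = (w - 1) sin 2θ · κ q_ω(θ) / q_w(θ)`, which gives the identity
`κ (1 - ω) sin 2θ = κ (w - ω) sin 2θ / q_w(θ) - (log q_w(θ))'`.
Freezing `w = ω(s)` on `[s, t]`, the corrected exponent `κ ∫ (1 - ω) sin 2θ + log q_ω(θ)` changes
by at most `(1 + κ (t - s)) · osc_[s,t] ω / min(1, inf ω)`: the jump of the weight inside the
logarithm plus the error term. Summing over partitions of vanishing mesh bounds its total change
by the variation of `ω` divided by `min(1, inf ω)`, uniformly in `λ`, and `log q_ω(θ)` is bounded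
because `q_ω` lies between `min(1, inf ω)` and `max(1, sup ω)`.
-/

open MeasureTheory Real Set Filter intervalIntegral

theorem aemeasurable_of_ae_continuousAt {α β : Type*} [MeasurableSpace α] [TopologicalSpace α]
    [OpensMeasurableSpace α] [MeasurableSpace β] [TopologicalSpace β] [BorelSpace β]
    {μ : Measure α} {f : α → β} (hf : ∀ᵐ x ∂μ, ContinuousAt f x) : AEMeasurable f μ := by
  rw [← Measure.restrict_eq_self_of_ae_mem hf]
  exact ContinuousOn.aemeasurable₀ (fun x hx => ContinuousAt.continuousWithinAt hx)
    (NullMeasurableSet.congr MeasurableSet.univ.nullMeasurableSet (ae_eq_univ.2 hf).symm)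

theorem AbsolutelyContinuousOnInterval.congr {X : Type*} [PseudoMetricSpace X] {f g : ℝ → X}
    {a b : ℝ} (hf : AbsolutelyContinuousOnInterval f a b) (hfg : EqOn f g (uIcc a b)) :
    AbsolutelyContinuousOnInterval g a b := by
  rw [absolutelyContinuousOnInterval_iff] at hf ⊢
  intro ε hε
  obtain ⟨δ, hδ, h⟩ := hf ε hε
  refine ⟨δ, hδ, fun E hE hlen => ?_⟩
  convert h E hE hlen using 2 with i hi
  rw [hfg (hE.1 i hi).1, hfg (hE.1 i hi).2]

theorem LipschitzWith.comp_absolutelyContinuousOnInterval {X Y : Type*} [PseudoMetricSpace X]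
    [PseudoMetricSpace Y] {f : ℝ → X} {g : X → Y} {K : NNReal} {a b : ℝ}
    (hg : LipschitzWith K g) (hf : AbsolutelyContinuousOnInterval f a b) :
    AbsolutelyContinuousOnInterval (g ∘ f) a b := by
  rw [absolutelyContinuousOnInterval_iff] at hf ⊢
  intro ε hε
  obtain ⟨δ, hδ, h⟩ := hf (ε / (K + 1)) (by positivity)
  refine ⟨δ, hδ, fun E hE hlen => ?_⟩
  calc ∑ i ∈ Finset.range E.1, dist (g (f (E.2 i).1)) (g (f (E.2 i).2))
      ≤ ∑ i ∈ Finset.range E.1, K * dist (f (E.2 i).1) (f (E.2 i).2) :=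
        Finset.sum_le_sum fun i _ => hg.dist_le_mul _ _
    _ = K * ∑ i ∈ Finset.range E.1, dist (f (E.2 i).1) (f (E.2 i).2) := (Finset.mul_sum ..).symm
    _ ≤ K * (ε / (K + 1)) := by gcongr; exact (h E hE hlen).le
    _ < ε := by
      rw [mul_div_assoc', div_lt_iff₀ (by positivity)]
      nlinarith

theorem AbsolutelyContinuousOnInterval.of_eq_add_integral {θ u : ℝ → ℝ} {a b : ℝ}
    (hu : IntervalIntegrable u volume a b) (hθ : ∀ x ∈ uIcc a b, θ x = θ a + ∫ t in a..x, u t) :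
    AbsolutelyContinuousOnInterval θ a b :=
  ((LipschitzWith.const (θ a)).lipschitzOnWith.absolutelyContinuousOnInterval.add
    (hu.absolutelyContinuousOnInterval_intervalIntegral left_mem_uIcc)).congr
    fun x hx => (hθ x hx).symm

theorem AbsolutelyContinuousOnInterval.integral_deriv_comp_mul_deriv {θ θ' Φ Φ' : ℝ → ℝ}
    {a b C : ℝ} (hθ : AbsolutelyContinuousOnInterval θ a b)
    (hθ' : ∀ᵐ t, t ∈ uIcc a b → HasDerivAt θ (θ' t) t) (hΦ : ∀ y, HasDerivAt Φ (Φ' y) y)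
    (hΦ' : ∀ y, |Φ' y| ≤ C) :
    ∫ t in a..b, Φ' (θ t) * θ' t = Φ (θ b) - Φ (θ a) := by
  have hΦC : LipschitzWith C.toNNReal Φ :=
    lipschitzWith_of_nnnorm_deriv_le (fun y => (hΦ y).differentiableAt) fun y => by
      rw [(hΦ y).deriv, ← NNReal.coe_le_coe, coe_nnnorm, Real.coe_toNNReal']
      exact (hΦ' y).trans (le_max_left _ _)
  rw [← Function.comp_apply (f := Φ), ← Function.comp_apply (f := Φ) (x := a),
    ← (hΦC.comp_absolutelyContinuousOnInterval hθ).integral_deriv_eq_sub]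
  refine integral_congr_ae ?_
  filter_upwards [hθ'] with t ht htI
  exact ((hΦ _).comp t (ht (uIoc_subset_uIcc htI))).deriv.symm

theorem Real.abs_log_sub_log_le {m x y : ℝ} (hm : 0 < m) (hx : m ≤ x) (hy : m ≤ y) :
    |log y - log x| ≤ |y - x| / m := by
  have h := (convex_Ici m).norm_image_sub_le_of_norm_hasDerivWithin_le (f := log)
    (fun z hz => (hasDerivAt_log (hm.trans_le hz).ne').hasDerivWithinAt)
    (fun z (hz : m ≤ z) => by
      rw [norm_inv, norm_of_nonneg (hm.le.trans hz)]; exact inv_anti₀ hm hz) hx hy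
  rwa [Real.norm_eq_abs, Real.norm_eq_abs, ← div_eq_inv_mul] at h

theorem abs_sub_le_of_forall_abs_sub_le_one_add_mul {G v : ℝ → ℝ} {a b κ : ℝ} (hab : a ≤ b)
    (h : ∀ s t, a ≤ s → s ≤ t → t ≤ b → |G t - G s| ≤ (1 + κ * (t - s)) * (v t - v s)) :
    |G b - G a| ≤ v b - v a := by
  have uniform_partition : ∀ n : ℕ, 0 < n →
      |G b - G a| ≤ (1 + κ * ((b - a) / n)) * (v b - v a) := by
    intro n hn
    set δ := (b - a) / n
    have hδ : 0 ≤ δ := div_nonneg (sub_nonneg.2 hab) n.cast_nonneg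
    have hnδ : a + n * δ = b := by
      rw [mul_div_cancel₀ _ (Nat.cast_ne_zero.2 hn.ne')]; ring
    have partial_sums : ∀ k ≤ n, |G (a + k * δ) - G a| ≤ (1 + κ * δ) * (v (a + k * δ) - v a) := by
      intro k
      induction k with
      | zero => simp
      | succ k ih =>
        intro hk
        have hkδ : a + (k + 1 : ℕ) * δ ≤ b := by
          rw [← hnδ]; gcongr
        have hstep := h (a + k * δ) (a + (k + 1 : ℕ) * δ) (by nlinarith) (by push_cast; nlinarith)
          hkδ
        have hlen : a + (k + 1 : ℕ) * δ - (a + k * δ) = δ := by push_cast; ring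
        rw [hlen] at hstep
        calc |G (a + (k + 1 : ℕ) * δ) - G a|
            ≤ |G (a + (k + 1 : ℕ) * δ) - G (a + k * δ)| + |G (a + k * δ) - G a| :=
              abs_sub_le _ _ _
          _ ≤ _ := add_le_add hstep (ih (by omega))
          _ = _ := by ring
    simpa [hnδ] using partial_sums n le_rfl
  have hlim : Tendsto (fun n : ℕ => (1 + κ * ((b - a) / n)) * (v b - v a)) atTop
      (nhds (v b - v a)) := by
    have := tendsto_const_div_atTop_nhds_zero_nat (b - a)
    simpa using ((this.const_mul κ).const_add 1).mul_const (v b - v a)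
  exact ge_of_tendsto hlim (eventually_atTop.2 ⟨1, fun n hn => uniform_partition n hn⟩)

-- For `ω` of bounded variation, its variation function is such a `v`.
def IsVariationMajorant (v ω : ℝ → ℝ) (a b : ℝ) : Prop :=
  ∀ ⦃s r t⦄, a ≤ s → s ≤ r → r ≤ t → t ≤ b → |ω r - ω s| ≤ v t - v s

section VariationMajorant

variable {v ω : ℝ → ℝ} {a b : ℝ}

theorem MonotoneOn.isVariationMajorant (h : MonotoneOn ω (Icc a b)) :
    IsVariationMajorant ω ω a b := by
  intro s r t has hsr hrt htb
  have hr : r ∈ Icc a b := ⟨has.trans hsr, hrt.trans htb⟩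
  rw [abs_of_nonneg (sub_nonneg.2 (h ⟨has, hsr.trans hr.2⟩ hr hsr))]
  linarith [h hr ⟨hr.1.trans hrt, htb⟩ hrt]

theorem AntitoneOn.isVariationMajorant_neg (h : AntitoneOn ω (Icc a b)) :
    IsVariationMajorant (-ω) ω a b := by
  intro s r t has hsr hrt htb
  have hr : r ∈ Icc a b := ⟨has.trans hsr, hrt.trans htb⟩
  rw [abs_of_nonpos (sub_nonpos.2 (h ⟨has, hsr.trans hr.2⟩ hr hsr)), Pi.neg_apply, Pi.neg_apply]
  linarith [h hr ⟨hr.1.trans hrt, htb⟩ hrt]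

theorem IsVariationMajorant.abs_sub_left_le (hv : IsVariationMajorant v ω a b) {r : ℝ}
    (hr : r ∈ Icc a b) : |ω r - ω a| ≤ v b - v a :=
  hv le_rfl hr.1 hr.2 le_rfl

theorem IsVariationMajorant.bddBelow_image (hv : IsVariationMajorant v ω a b) :
    BddBelow (ω '' Icc a b) := by
  refine ⟨ω a - (v b - v a), ?_⟩
  rintro _ ⟨r, hr, rfl⟩
  linarith [(abs_le.1 (hv.abs_sub_left_le hr)).1]

end VariationMajorant

-- The Prüfer equation reads `θ' = √λ * pruferSpeed ω θ`.
noncomputable def pruferSpeed (w y : ℝ) : ℝ := cos y ^ 2 + w * sin y ^ 2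

theorem min_one_le_pruferSpeed (w y : ℝ) : min 1 w ≤ pruferSpeed w y := by
  unfold pruferSpeed
  nlinarith [min_le_left 1 w, min_le_right 1 w, sq_nonneg (cos y), sq_nonneg (sin y),
    sin_sq_add_cos_sq y]

theorem pruferSpeed_pos {w : ℝ} (hw : 0 < w) (y : ℝ) : 0 < pruferSpeed w y :=
  (lt_min one_pos hw).trans_le (min_one_le_pruferSpeed w y)

theorem abs_log_pruferSpeed_le {m M w : ℝ} (hm : 0 < m) (hmw : m ≤ w) (hwM : w ≤ M) (y : ℝ) :
    |log (pruferSpeed w y)| ≤ log (max 1 M) - log (min 1 m) := by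
  have hm' : 0 < min 1 m := lt_min one_pos hm
  have hlow : min 1 m ≤ pruferSpeed w y :=
    (min_le_min_left 1 hmw).trans (min_one_le_pruferSpeed w y)
  have hupp : pruferSpeed w y ≤ max 1 M := by
    unfold pruferSpeed
    nlinarith [le_max_left 1 M, le_max_right 1 M, sq_nonneg (cos y), sq_nonneg (sin y),
      sin_sq_add_cos_sq y]
  have h0 : log (min 1 m) ≤ 0 := log_nonpos hm'.le (min_le_left 1 m)
  have h1 : 0 ≤ log (max 1 M) := log_nonneg (le_max_left 1 M)
  rw [abs_le]
  constructor
  · linarith [log_le_log hm' hlow]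
  · linarith [log_le_log (hm'.trans_le hlow) hupp]

theorem abs_sin_two_mul_div_pruferSpeed_le {m w : ℝ} (hm : 0 < m) (hmw : m ≤ w) (y : ℝ) :
    |sin (2 * y) / pruferSpeed w y| ≤ 1 / min 1 m := by
  have hlow : min 1 m ≤ pruferSpeed w y :=
    (min_le_min_left 1 hmw).trans (min_one_le_pruferSpeed w y)
  rw [abs_div, abs_of_pos ((lt_min one_pos hm).trans_le hlow)]
  exact div_le_div₀ zero_le_one (abs_sin_le_one _) (lt_min one_pos hm) hlow

theorem abs_log_pruferSpeed_sub_log_pruferSpeed_le {m w w' : ℝ} (hm : 0 < m) (hmw : m ≤ w)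
    (hmw' : m ≤ w') (y : ℝ) :
    |log (pruferSpeed w' y) - log (pruferSpeed w y)| ≤ |w' - w| / min 1 m := by
  have hlow : ∀ {u}, m ≤ u → min 1 m ≤ pruferSpeed u y :=
    fun hmu => (min_le_min_left 1 hmu).trans (min_one_le_pruferSpeed _ y)
  refine (abs_log_sub_log_le (lt_min one_pos hm) (hlow hmw) (hlow hmw')).trans
    (div_le_div_of_nonneg_right ?_ (lt_min one_pos hm).le)
  have hdiff : pruferSpeed w' y - pruferSpeed w y = (w' - w) * sin y ^ 2 := by
    unfold pruferSpeed; ring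
  rw [hdiff, abs_mul, abs_of_nonneg (sq_nonneg (sin y))]
  exact mul_le_of_le_one_right (abs_nonneg _) (sin_sq_le_one y)

theorem hasDerivAt_pruferSpeed (w y : ℝ) :
    HasDerivAt (pruferSpeed w) ((w - 1) * sin (2 * y)) y := by
  refine (((hasDerivAt_cos y).fun_pow 2).fun_add
    (((hasDerivAt_sin y).fun_pow 2).const_mul w)).congr_deriv ?_
  rw [sin_two_mul]
  push_cast
  ring

theorem continuous_pruferSpeed (w : ℝ) : Continuous (pruferSpeed w) :=
  continuous_iff_continuousAt.2 fun y => (hasDerivAt_pruferSpeed w y).continuousAt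

theorem hasDerivAt_log_pruferSpeed {w : ℝ} (hw : 0 < w) (y : ℝ) :
    HasDerivAt (fun z => log (pruferSpeed w z)) ((w - 1) * (sin (2 * y) / pruferSpeed w y)) y := by
  convert (hasDerivAt_pruferSpeed w y).log (pruferSpeed_pos hw y).ne' using 1
  ring

theorem one_sub_mul_sin_two_mul_eq {v w y : ℝ} (hw : 0 < w) :
    (1 - v) * sin (2 * y) = (w - v) * (sin (2 * y) / pruferSpeed w y)
      - (w - 1) * (sin (2 * y) / pruferSpeed w y) * pruferSpeed v y := by
  have hq := (pruferSpeed_pos hw y).ne'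
  field_simp
  unfold pruferSpeed
  linear_combination sin (2 * y) * (w - v) * (sin_sq_add_cos_sq y)

section PruferAngle

variable {κ s t : ℝ} {ω θ : ℝ → ℝ}

theorem absolutelyContinuousOnInterval_of_hasDerivAt_pruferSpeed {a b : ℝ}
    (hab : a ≤ b) (hω : IntegrableOn ω (Icc a b))
    (hθ' : ∀ᵐ r ∂volume.restrict (Icc a b), HasDerivAt θ (κ * pruferSpeed (ω r) (θ r)) r)
    (hθ : ∀ x ∈ Icc a b, θ x = θ a + ∫ r in a..x, κ * pruferSpeed (ω r) (θ r)) :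
    AbsolutelyContinuousOnInterval θ a b := by
  have hθmeas : AEStronglyMeasurable θ (volume.restrict (Icc a b)) :=
    (aemeasurable_of_ae_continuousAt (hθ'.mono fun r hr => hr.continuousAt)).aestronglyMeasurable
  have hcos : IntegrableOn (fun r => cos (θ r) ^ 2) (Icc a b) :=
    (integrable_const (1 : ℝ)).mono' ((continuous_cos.pow 2).comp_aestronglyMeasurable hθmeas)
      (ae_of_all _ fun r => by
        rw [norm_of_nonneg (sq_nonneg _)]; exact cos_sq_le_one _)
  have hsin : IntegrableOn (fun r => ω r * sin (θ r) ^ 2) (Icc a b) :=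
    hω.mul_bdd ((continuous_sin.pow 2).comp_aestronglyMeasurable hθmeas)
      (ae_of_all _ fun r => by
        rw [norm_of_nonneg (sq_nonneg _)]; exact sin_sq_le_one _)
  refine .of_eq_add_integral ((intervalIntegrable_iff_integrableOn_Icc_of_le hab).2
    ((hcos.add hsin).const_mul κ)) ?_
  rwa [uIcc_of_le hab]

theorem intervalIntegrable_one_sub_mul_sin_two_mul {a b : ℝ}
    (hω : IntervalIntegrable ω volume a b) (hθ : ContinuousOn θ (uIcc a b)) :
    IntervalIntegrable (fun r => (1 - ω r) * sin (2 * θ r)) volume a b :=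
  (intervalIntegrable_const.sub hω).mul_continuousOn
    ((continuous_sin.comp (continuous_const_mul 2)).comp_continuousOn hθ)

theorem integral_one_sub_mul_sin_two_mul_eq {w : ℝ} (hw : 0 < w)
    (hθ : AbsolutelyContinuousOnInterval θ s t)
    (hθ' : ∀ᵐ r, r ∈ uIcc s t → HasDerivAt θ (κ * pruferSpeed (ω r) (θ r)) r)
    (hω : IntervalIntegrable ω volume s t) :
    κ * ∫ r in s..t, (1 - ω r) * sin (2 * θ r) =
      (∫ r in s..t, κ * (w - ω r) * (sin (2 * θ r) / pruferSpeed w (θ r)))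
        - (log (pruferSpeed w (θ t)) - log (pruferSpeed w (θ s))) := by
  have hchain := hθ.integral_deriv_comp_mul_deriv hθ' (hasDerivAt_log_pruferSpeed hw)
    fun y => (abs_mul _ _).trans_le (mul_le_mul_of_nonneg_left
      (abs_sin_two_mul_div_pruferSpeed_le hw le_rfl y) (abs_nonneg _))
  have hcont : ContinuousOn (fun r => sin (2 * θ r) / pruferSpeed w (θ r)) (uIcc s t) :=
    ((continuous_sin.comp (continuous_const_mul 2)).comp_continuousOn hθ.continuousOn).div
      ((continuous_pruferSpeed w).comp_continuousOn hθ.continuousOn)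
      fun r _ => (pruferSpeed_pos hw _).ne'
  have hsplit : ∫ r in s..t, (w - 1) * (sin (2 * θ r) / pruferSpeed w (θ r))
        * (κ * pruferSpeed (ω r) (θ r)) =
      (∫ r in s..t, κ * (w - ω r) * (sin (2 * θ r) / pruferSpeed w (θ r)))
        - ∫ r in s..t, κ * ((1 - ω r) * sin (2 * θ r)) := by
    rw [← integral_sub (((intervalIntegrable_const.sub hω).const_mul κ).mul_continuousOn hcont)
      ((intervalIntegrable_one_sub_mul_sin_two_mul hω hθ.continuousOn).const_mul κ)]
    refine integral_congr fun r _ => ?_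
    simp only [one_sub_mul_sin_two_mul_eq (v := ω r) (y := θ r) hw]
    ring
  rw [← hchain, hsplit, intervalIntegral.integral_const_mul]
  ring

theorem abs_integral_add_log_pruferSpeed_sub_le {m D : ℝ} (hκ : 0 ≤ κ) (hm : 0 < m) (hst : s ≤ t)
    (hθ : AbsolutelyContinuousOnInterval θ s t)
    (hθ' : ∀ᵐ r, r ∈ uIcc s t → HasDerivAt θ (κ * pruferSpeed (ω r) (θ r)) r)
    (hω : IntervalIntegrable ω volume s t) (hms : m ≤ ω s) (hmt : m ≤ ω t)
    (hD : ∀ r ∈ Icc s t, |ω r - ω s| ≤ D) :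
    |κ * (∫ r in s..t, (1 - ω r) * sin (2 * θ r))
        + (log (pruferSpeed (ω t) (θ t)) - log (pruferSpeed (ω s) (θ s)))|
      ≤ (1 + κ * (t - s)) * D / min 1 m := by
  rw [integral_one_sub_mul_sin_two_mul_eq (hm.trans_le hms) hθ hθ' hω]
  have herror : |∫ r in s..t, κ * (ω s - ω r) * (sin (2 * θ r) / pruferSpeed (ω s) (θ r))|
      ≤ κ * D * (1 / min 1 m) * (t - s) := by
    have h := norm_integral_le_of_norm_le_const (a := s) (b := t)
      (f := fun r => κ * (ω s - ω r) * (sin (2 * θ r) / pruferSpeed (ω s) (θ r)))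
      (C := κ * D * (1 / min 1 m)) fun r hr => by
        rw [uIoc_of_le hst] at hr
        rw [Real.norm_eq_abs, abs_mul, abs_mul, abs_of_nonneg hκ, abs_sub_comm]
        gcongr
        · exact mul_nonneg hκ ((abs_nonneg _).trans (hD s (left_mem_Icc.2 hst)))
        · exact hD r (Ioc_subset_Icc_self hr)
        · exact abs_sin_two_mul_div_pruferSpeed_le hm hms _
    rwa [Real.norm_eq_abs, abs_of_nonneg (sub_nonneg.2 hst)] at h
  have hjump : |log (pruferSpeed (ω t) (θ t)) - log (pruferSpeed (ω s) (θ t))| ≤ D / min 1 m :=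
    (abs_log_pruferSpeed_sub_log_pruferSpeed_le hm hms hmt _).trans
      (div_le_div_of_nonneg_right (hD t (right_mem_Icc.2 hst)) (lt_min one_pos hm).le)
  calc _ = |(∫ r in s..t, κ * (ω s - ω r) * (sin (2 * θ r) / pruferSpeed (ω s) (θ r)))
          + (log (pruferSpeed (ω t) (θ t)) - log (pruferSpeed (ω s) (θ t)))| := by ring_nf
    _ ≤ κ * D * (1 / min 1 m) * (t - s) + D / min 1 m :=
        (abs_add_le _ _).trans (add_le_add herror hjump)
    _ = (1 + κ * (t - s)) * D / min 1 m := by ring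

-- Equals `2 H(x; λ) + log q_ω(θ(x))` for `κ = √λ` and `a = 0`.
noncomputable def pruferCorrectedExponent (κ : ℝ) (ω θ : ℝ → ℝ) (a x : ℝ) : ℝ :=
  κ * (∫ r in a..x, (1 - ω r) * sin (2 * θ r)) + log (pruferSpeed (ω x) (θ x))

theorem abs_pruferCorrectedExponent_sub_le {m a b x : ℝ} {v : ℝ → ℝ}
    (hκ : 0 ≤ κ) (hm : 0 < m) (hθ : AbsolutelyContinuousOnInterval θ a b)
    (hθ' : ∀ᵐ r, r ∈ uIcc a b → HasDerivAt θ (κ * pruferSpeed (ω r) (θ r)) r)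
    (hω : IntervalIntegrable ω volume a b) (hωm : ∀ r ∈ Icc a b, m ≤ ω r)
    (hv : IsVariationMajorant v ω a b) (hx : x ∈ Icc a b) :
    |pruferCorrectedExponent κ ω θ a x - pruferCorrectedExponent κ ω θ a a|
      ≤ (v x - v a) / min 1 m := by
  have hab : a ≤ b := hx.1.trans hx.2
  have hsub : ∀ {s t}, a ≤ s → s ≤ t → t ≤ b → uIcc s t ⊆ uIcc a b := fun has hst htb => by
    rw [uIcc_of_le hst, uIcc_of_le hab]; exact Icc_subset_Icc has htb
  have hint : ∀ {s t}, a ≤ s → s ≤ t → t ≤ b →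
      IntervalIntegrable (fun r => (1 - ω r) * sin (2 * θ r)) volume s t := fun has hst htb =>
    (intervalIntegrable_one_sub_mul_sin_two_mul hω hθ.continuousOn).mono_set (hsub has hst htb)
  rw [sub_div]
  refine abs_sub_le_of_forall_abs_sub_le_one_add_mul (v := fun y => v y / min 1 m) (κ := κ) hx.1
    fun s t has hst htx => ?_
  have htb := htx.trans hx.2
  have hincr : pruferCorrectedExponent κ ω θ a t - pruferCorrectedExponent κ ω θ a s
      = κ * (∫ r in s..t, (1 - ω r) * sin (2 * θ r))
        + (log (pruferSpeed (ω t) (θ t)) - log (pruferSpeed (ω s) (θ s))) := by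
    rw [pruferCorrectedExponent, pruferCorrectedExponent, ← integral_interval_sub_left
      (hint le_rfl (has.trans hst) htb) (hint le_rfl has (hst.trans htb))]
    ring
  rw [hincr, ← sub_div, mul_div_assoc']
  exact abs_integral_add_log_pruferSpeed_sub_le hκ hm hst (hθ.mono (hsub has hst htb))
    (hθ'.mono fun r hr hrI => hr (hsub has hst htb hrI)) (hω.mono_set (hsub has hst htb))
    (hωm s ⟨has, hst.trans htb⟩) (hωm t ⟨has.trans hst, htb⟩)
    fun r hr => hv has hr.1 hr.2 htb

theorem abs_mul_integral_one_sub_mul_sin_two_mul_le {m a b x : ℝ} {v : ℝ → ℝ}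
    (hκ : 0 ≤ κ) (hm : 0 < m) (hθ : AbsolutelyContinuousOnInterval θ a b)
    (hθ' : ∀ᵐ r, r ∈ uIcc a b → HasDerivAt θ (κ * pruferSpeed (ω r) (θ r)) r)
    (hω : IntervalIntegrable ω volume a b) (hωm : ∀ r ∈ Icc a b, m ≤ ω r)
    (hv : IsVariationMajorant v ω a b) (hx : x ∈ Icc a b) :
    |κ * ∫ r in a..x, (1 - ω r) * sin (2 * θ r)|
      ≤ (v b - v a) / min 1 m + 2 * (log (max 1 (ω a + (v b - v a))) - log (min 1 m)) := by
  set L := log (max 1 (ω a + (v b - v a))) - log (min 1 m)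
  have hlog : ∀ r ∈ Icc a b, |log (pruferSpeed (ω r) (θ r))| ≤ L := fun r hr =>
    abs_log_pruferSpeed_le hm (hωm r hr) (by linarith [(abs_le.1 (hv.abs_sub_left_le hr)).2]) _
  have hvx : v x ≤ v b := by
    have h := hv hx.1 le_rfl hx.2 le_rfl
    rw [sub_self, abs_zero] at h
    linarith
  have hG := abs_pruferCorrectedExponent_sub_le hκ hm hθ hθ' hω hωm hv hx
  have hsplit : κ * ∫ r in a..x, (1 - ω r) * sin (2 * θ r)
      = pruferCorrectedExponent κ ω θ a x - pruferCorrectedExponent κ ω θ a a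
        - log (pruferSpeed (ω x) (θ x)) + log (pruferSpeed (ω a) (θ a)) := by
    simp only [pruferCorrectedExponent, integral_same]
    ring
  rw [hsplit]
  calc _ ≤ (v x - v a) / min 1 m + L + L :=
        (abs_add_le _ _).trans (add_le_add ((abs_sub _ _).trans (add_le_add hG (hlog x hx)))
          (hlog a ⟨le_rfl, hx.1.trans hx.2⟩))
    _ ≤ (v b - v a) / min 1 m + 2 * L := by
      have := div_le_div_of_nonneg_right (sub_le_sub_right hvx (v a)) (lt_min one_pos hm).le
      linarith

end PruferAngle

theorem prufer_exponent_uniformly_bounded_general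
    (ω : ℝ → ℝ)
    (hωmono : MonotoneOn ω (Icc (0:ℝ) 1) ∨ AntitoneOn ω (Icc (0:ℝ) 1))
    (hωinf : 0 < sInf (ω '' Icc (0:ℝ) 1))
    (hωint : IntegrableOn ω (Icc (0:ℝ) 1))
    (θ : ℝ → ℝ → ℝ)
    (hθae : ∀ lam : ℝ, 0 ≤ lam → ∀ᵐ x ∂(volume.restrict (Icc (0:ℝ) 1)),
        HasDerivAt (θ lam)
          (Real.sqrt lam * (Real.cos (θ lam x) ^ 2 + ω x * Real.sin (θ lam x) ^ 2)) x)
    (hθFTC : ∀ lam : ℝ, 0 ≤ lam → ∀ x ∈ Icc (0:ℝ) 1,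
        θ lam x = θ lam 0 + ∫ t in (0:ℝ)..x,
          Real.sqrt lam * (Real.cos (θ lam t) ^ 2 + ω t * Real.sin (θ lam t) ^ 2))
    (H : ℝ → ℝ → ℝ)
    (hH : ∀ lam : ℝ, ∀ x : ℝ,
        H lam x = Real.sqrt lam / 2 * ∫ t in (0:ℝ)..x, (1 - ω t) * Real.sin (2 * θ lam t)) :
    ∃ H₀ > (0:ℝ), ∃ Λ > (0:ℝ), ∀ lam : ℝ, Λ ≤ lam → ∀ x ∈ Icc (0:ℝ) 1,
      |H lam x| ≤ H₀ := by
  obtain ⟨v, hv⟩ : ∃ v, IsVariationMajorant v ω 0 1 :=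
    hωmono.elim (fun h => ⟨ω, h.isVariationMajorant⟩) fun h => ⟨-ω, h.isVariationMajorant_neg⟩
  set c := sInf (ω '' Icc (0:ℝ) 1)
  have hc : ∀ r ∈ Icc (0:ℝ) 1, c ≤ ω r := fun r hr =>
    csInf_le hv.bddBelow_image (mem_image_of_mem ω hr)
  set B := (v 1 - v 0) / min 1 c + 2 * (log (max 1 (ω 0 + (v 1 - v 0))) - log (min 1 c))
  refine ⟨max (B / 2) 1, lt_max_of_lt_right one_pos, 1, one_pos, fun lam hlam x hx => ?_⟩
  have hlam : 0 ≤ lam := zero_le_one.trans hlam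
  have hθAC := absolutelyContinuousOnInterval_of_hasDerivAt_pruferSpeed zero_le_one hωint
    (hθae lam hlam) (hθFTC lam hlam)
  have hθ' : ∀ᵐ r, r ∈ uIcc 0 1 → HasDerivAt (θ lam) (√lam * pruferSpeed (ω r) (θ lam r)) r := by
    rw [uIcc_of_le zero_le_one]
    exact (ae_restrict_iff' measurableSet_Icc).1 (hθae lam hlam)
  have hbound := abs_mul_integral_one_sub_mul_sin_two_mul_le (sqrt_nonneg lam) hωinf hθAC hθ'
    ((intervalIntegrable_iff_integrableOn_Icc_of_le zero_le_one).2 hωint) hc hv hx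
  calc |H lam x| = |√lam * ∫ t in (0:ℝ)..x, (1 - ω t) * sin (2 * θ lam t)| / 2 := by
        rw [hH, div_mul_eq_mul_div, abs_div, abs_two]
    _ ≤ B / 2 := by gcongr
    _ ≤ max (B / 2) 1 := le_max_left _ _

/-- Uniform boundedness of the Prüfer radius exponent
H(x;λ) = (√λ/2) ∫₀ˣ (1 − ω(t)) sin(2θ(t;λ)) dt, where ω is monotone on [0,1]
with positive infimum and θ is the Prüfer angle: there are H₀ > 0 and Λ > 0
with |H(x;λ)| ≤ H₀ for all x ∈ [0,1] and λ ≥ Λ. -/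
theorem prufer_exponent_uniformly_bounded
    (ω : ℝ → ℝ)
    (hωmono : MonotoneOn ω (Icc (0:ℝ) 1) ∨ AntitoneOn ω (Icc (0:ℝ) 1))
    (hωinf : 0 < sInf (ω '' Icc (0:ℝ) 1))
    (hωint : IntegrableOn ω (Icc (0:ℝ) 1))
    (θ : ℝ → ℝ → ℝ)
    (hθ0 : ∀ lam : ℝ, 0 ≤ lam → θ lam 0 ∈ Ico (0:ℝ) π)
    (hθae : ∀ lam : ℝ, 0 ≤ lam → ∀ᵐ x ∂(volume.restrict (Icc (0:ℝ) 1)),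
        HasDerivAt (θ lam)
          (Real.sqrt lam * (Real.cos (θ lam x) ^ 2 + ω x * Real.sin (θ lam x) ^ 2)) x)
    (hθFTC : ∀ lam : ℝ, 0 ≤ lam → ∀ x ∈ Icc (0:ℝ) 1,
        θ lam x = θ lam 0 + ∫ t in (0:ℝ)..x,
          Real.sqrt lam * (Real.cos (θ lam t) ^ 2 + ω t * Real.sin (θ lam t) ^ 2))
    (H : ℝ → ℝ → ℝ)
    (hH : ∀ lam : ℝ, ∀ x : ℝ,
        H lam x = Real.sqrt lam / 2 * ∫ t in (0:ℝ)..x, (1 - ω t) * Real.sin (2 * θ lam t)) :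
    ∃ H₀ > (0:ℝ), ∃ Λ > (0:ℝ), ∀ lam : ℝ, Λ ≤ lam → ∀ x ∈ Icc (0:ℝ) 1,
      |H lam x| ≤ H₀ :=
  prufer_exponent_uniformly_bounded_general ω hωmono hωinf hωint θ hθae hθFTC H hH
end
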